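/- arXiv:1111.1396 — 3 statements merged into one kernel-verified Lean document; each statement's English description precedes it below -/
import Mathlib

section
/- Let x ∈ ℝ^n be a k-sparse vector with support set K, and let L ⊆ {1,…,n} be any index set with |L| = k. If e ∈ ℝ^n satisfies max_{i ∈ K∖L} |x_i + e_i| ≤ min_{i ∈ L} |x_i + e_i|, then ‖e‖₁ ≥ ‖x_{K∖L}‖₁. -/
open Finset

/-! Since `#K = #L`, the sets `K \ L` and `L \ K` have the same size, and `x` vanishes on
`L \ K`. Each `|x i + e i|` with `i ∈ K \ L` is at most every `|x j + e j| = |e j|` with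
`j ∈ L \ K`, so `∑_{K \ L} |x + e| ≤ ∑_{L \ K} |e|`. The triangle inequality
`|x i| ≤ |x i + e i| + |e i|` on `K \ L` then bounds `∑_{K \ L} |x|` by the mass of `e` on the
disjoint sets `L \ K` and `K \ L`. -/

/-- The support of a vector `x : Fin n → ℝ` as a `Finset`. -/
noncomputable def spt {n : ℕ} (x : Fin n → ℝ) : Finset (Fin n) :=
  Finset.univ.filter (fun i => x i ≠ 0)

theorem Finset.sum_le_sum_of_card_eq_of_forall_le {ι M : Type*} [AddCommMonoid M]
    [SemilatticeInf M] [AddLeftMono M] {s t : Finset ι} {f g : ι → M} (hst : #s = #t)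
    (h : ∀ i ∈ s, ∀ j ∈ t, f i ≤ g j) : ∑ i ∈ s, f i ≤ ∑ j ∈ t, g j := by
  rcases t.eq_empty_or_nonempty with rfl | ht
  · rw [card_empty, card_eq_zero] at hst
    simp [hst]
  calc ∑ i ∈ s, f i ≤ #s • t.inf' ht g :=
        sum_le_card_nsmul s f _ fun i hi => le_inf' ht g fun j hj => h i hi j hj
    _ = #t • t.inf' ht g := by rw [hst]
    _ ≤ ∑ j ∈ t, g j := card_nsmul_le_sum t g _ fun j hj => inf'_le g hj

theorem Finset.sum_abs_le_sum_abs_add_add_sum_abs {ι : Type*} (s : Finset ι) (x e : ι → ℝ) :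
    ∑ i ∈ s, |x i| ≤ ∑ i ∈ s, |x i + e i| + ∑ i ∈ s, |e i| := by
  rw [← sum_add_distrib]
  refine sum_le_sum fun i _ => ?_
  simpa using abs_sub (x i + e i) (e i)

theorem Finset.sum_sdiff_add_sum_sdiff_le_sum_univ {ι M : Type*} [Fintype ι] [DecidableEq ι]
    [AddCommMonoid M] [PartialOrder M] [IsOrderedAddMonoid M] (s t : Finset ι) {f : ι → M}
    (hf : ∀ i, 0 ≤ f i) :
    ∑ i ∈ s \ t, f i + ∑ i ∈ t \ s, f i ≤ ∑ i, f i := by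
  rw [← sum_union disjoint_sdiff_sdiff]
  exact sum_le_univ_sum_of_nonneg hf

/-- If `x` is `k`-sparse with support `K`, `L` is an index set of size `k`, and `e` satisfies
`max_{i ∈ K∖L} |x_i + e_i| ≤ min_{i ∈ L} |x_i + e_i|`, then `‖e‖₁ ≥ ‖x_{K∖L}‖₁`. -/
theorem stmt1 {n k : ℕ} (x e : Fin n → ℝ) (K L : Finset (Fin n))
    (hK : K = spt x) (hk : K.card = k) (hL : L.card = k)
    (h : ∀ i ∈ K \ L, ∀ j ∈ L, |x i + e i| ≤ |x j + e j|) :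
    ∑ i ∈ K \ L, |x i| ≤ ∑ i, |e i| := by
  have hx : ∀ j ∈ L \ K, x j = 0 := fun j hj => by
    simpa [hK, spt] using (mem_sdiff.mp hj).2
  have hmass : ∑ i ∈ K \ L, |x i + e i| ≤ ∑ j ∈ L \ K, |e j| := by
    refine sum_le_sum_of_card_eq_of_forall_le (card_sdiff_comm (hk.trans hL.symm))
      fun i hi j hj => ?_
    simpa [hx j hj] using h i hi j (mem_sdiff.mp hj).1
  calc ∑ i ∈ K \ L, |x i| ≤ ∑ i ∈ K \ L, |x i + e i| + ∑ i ∈ K \ L, |e i| :=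
        sum_abs_le_sum_abs_add_add_sum_abs _ x e
    _ ≤ ∑ j ∈ L \ K, |e j| + ∑ i ∈ K \ L, |e i| := by gcongr
    _ ≤ ∑ i, |e i| := sum_sdiff_add_sum_sdiff_le_sum_univ L K fun i => abs_nonneg (e i)
end

section
/- Fix γ ∈ (0,1). For each k, let x be a k-sparse random vector in ℝ^n (n ≥ k) whose k nonzero entries are i.i.d. standard normal N(0,1), let k₁ = ⌊γ k⌋, and let K₁ be a k₁-support of x. Then for every sufficiently small ε > 0, P(| ‖x_{K̄₁}‖₁ / ‖x‖₁ − (1 − exp(−Ψ(γ/2)²/2)) | > ε) → 0 as k → ∞. -/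
/-!
Let `S = ∑ᵢ |xᵢ|`, and for a threshold `t ≥ 0` let `T(t)` and `N(t)` be the sum and the number of
the entries with `|xᵢ| > t`. By Chebyshev's inequality these empirical sums concentrate:
`S/k → E|g| = √(2/π)`, `T(t)/k → E[|g|; |g| > t] = √(2/π) e^{-t²/2}` and `N(t)/k → 2Q(t)`.
Pick `c < a < b` close to `a = Ψ(γ/2)`, so that `2Q(b) < γ < 2Q(c)`. With high probability
`N(b) < k₁ ≤ N(c)`, which forces `{|xᵢ| > b} ⊆ K₁ ⊆ {|xᵢ| > c}`, so `∑_{K₁} |xᵢ|` is squeezed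
between `T(b)` and `T(c)`, both `≈ k √(2/π) e^{-a²/2}`. Dividing by `S ≈ k √(2/π)` gives the limit.
-/

open Finset MeasureTheory ProbabilityTheory Filter

/-- The standard Gaussian upper tail function `Q`. -/
noncomputable def gaussQ (x : ℝ) : ℝ :=
  (Real.sqrt (2 * Real.pi))⁻¹ * ∫ y in Set.Ioi x, Real.exp (-(y ^ 2) / 2)

open Real Set

lemma gaussianPDFReal_zero_one (y : ℝ) :
    gaussianPDFReal 0 1 y = (√(2 * π))⁻¹ * exp (-(y ^ 2) / 2) := by
  simp [gaussianPDFReal]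

lemma integrable_exp_neg_sq_div_two : Integrable fun y : ℝ => exp (-(y ^ 2) / 2) := by
  simpa [neg_div, div_eq_inv_mul] using integrable_exp_neg_mul_sq (b := 1 / 2) (by norm_num)

lemma gaussQ_strictAnti : StrictAnti gaussQ := by
  intro s t hst
  have hsplit : ∫ y in Ioi s, exp (-(y ^ 2) / 2) =
      (∫ y in Ioc s t, exp (-(y ^ 2) / 2)) + ∫ y in Ioi t, exp (-(y ^ 2) / 2) := by
    rw [← Ioc_union_Ioi_eq_Ioi hst.le, setIntegral_union (Ioc_disjoint_Ioi le_rfl)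
      measurableSet_Ioi integrable_exp_neg_sq_div_two.integrableOn
      integrable_exp_neg_sq_div_two.integrableOn]
  have hsupp : Function.support (fun y : ℝ => exp (-(y ^ 2) / 2)) = univ :=
    eq_univ_of_forall fun y => (exp_pos _).ne'
  have hpos : 0 < ∫ y in Ioc s t, exp (-(y ^ 2) / 2) := by
    rw [setIntegral_pos_iff_support_of_nonneg_ae (.of_forall fun y => (exp_pos _).le)
      integrable_exp_neg_sq_div_two.integrableOn,
      hsupp, univ_inter, Real.volume_Ioc]
    simpa using hst
  unfold gaussQ
  gcongr
  linarith

lemma gaussQ_zero : gaussQ 0 = 1 / 2 := by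
  have h : ∫ y in Ioi (0 : ℝ), exp (-(y ^ 2) / 2) = ∫ y in Ioi (0 : ℝ), exp (-(1 / 2) * y ^ 2) := by
    congr 1 with y
    ring_nf
  rw [gaussQ, h, integral_gaussian_Ioi, show π / (1 / 2) = 2 * π by ring]
  field_simp

lemma integral_Ioi_mul_exp_neg_sq_div_two {t : ℝ} (ht : 0 ≤ t) :
    ∫ y in Ioi t, y * exp (-(y ^ 2) / 2) = exp (-(t ^ 2) / 2) := by
  have hderiv (y : ℝ) :
      HasDerivAt (fun z => -exp (-(z ^ 2) / 2)) (y * exp (-(y ^ 2) / 2)) y := by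
    have h : HasDerivAt (fun z : ℝ => -(z ^ 2) / 2) (-y) y :=
      ((hasDerivAt_pow 2 y).fun_neg.div_const 2).congr_deriv (by push_cast; ring)
    exact h.exp.fun_neg.congr_deriv (by ring)
  have hlim : Tendsto (fun z : ℝ => -exp (-(z ^ 2) / 2)) atTop (nhds 0) := by
    simpa using (tendsto_exp_atBot.comp
      ((tendsto_neg_atTop_atBot.comp (tendsto_pow_atTop two_ne_zero)).atBot_div_const
        two_pos)).neg
  rw [integral_Ioi_of_hasDerivAt_of_nonneg (hderiv t).continuousAt.continuousWithinAt
    (fun y _ => hderiv y) (fun y hy => mul_nonneg (ht.trans hy.le) (exp_pos _).le) hlim]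
  ring

lemma integral_ite_lt_abs_gaussianReal {h : ℝ → ℝ}
    (hh : Integrable fun y => gaussianPDFReal 0 1 y * h |y|) {t : ℝ} (ht : 0 ≤ t) :
    ∫ y, (if t < |y| then h |y| else 0) ∂gaussianReal 0 1 =
      2 * ∫ y in Ioi t, gaussianPDFReal 0 1 y * h y := by
  set F := fun y => gaussianPDFReal 0 1 y * h |y|
  have hF (y : ℝ) : (gaussianPDFReal 0 1 y • if t < |y| then h |y| else 0) =
      (Iio (-t) ∪ Ioi t).indicator F y := by
    have : y ∈ Iio (-t) ∪ Ioi t ↔ t < |y| := by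
      rw [lt_abs, mem_union, Set.mem_Iio, Set.mem_Ioi, lt_neg, or_comm]
    by_cases hy : t < |y| <;> simp [indicator, this, hy, F]
  have hdisj : Disjoint (Iio (-t)) (Ioi t) :=
    (Iio_disjoint_Ici le_rfl).mono_right (Ioi_subset_Ici (neg_le_self ht))
  have hneg : ∫ y in Iio (-t), F y = ∫ y in Ioi t, F y := by
    rw [setIntegral_congr_set Iio_ae_eq_Iic, ← integral_comp_neg_Ioi]
    simp [F, gaussianPDFReal_zero_one]
  rw [integral_gaussianReal_eq_integral_smul one_ne_zero]
  simp_rw [hF]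
  rw [integral_indicator (measurableSet_Iio.union measurableSet_Ioi),
    setIntegral_union hdisj measurableSet_Ioi hh.integrableOn hh.integrableOn, hneg, ← two_mul]
  congr 1
  refine setIntegral_congr_fun measurableSet_Ioi fun y hy => ?_
  simp [F, abs_of_pos (ht.trans_lt hy)]

lemma integral_ite_lt_abs_abs_gaussianReal {t : ℝ} (ht : 0 ≤ t) :
    ∫ y, (if t < |y| then |y| else 0) ∂gaussianReal 0 1 = √(2 / π) * exp (-(t ^ 2) / 2) := by
  have hint : Integrable fun y => gaussianPDFReal 0 1 y * |y| := by
    simpa [gaussianPDFReal_zero_one, neg_div, div_eq_inv_mul, mul_comm, mul_left_comm,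
      mul_assoc] using
      (integrable_mul_exp_neg_mul_sq (b := 1 / 2) (by norm_num)).abs.const_mul (√(2 * π))⁻¹
  rw [integral_ite_lt_abs_gaussianReal (h := fun y => y) hint ht]
  simp_rw [gaussianPDFReal_zero_one, mul_assoc, mul_comm (exp _)]
  rw [integral_const_mul, integral_Ioi_mul_exp_neg_sq_div_two ht, ← mul_assoc,
    sqrt_div zero_le_two, sqrt_mul zero_le_two]
  field_simp
  norm_num

lemma integral_abs_gaussianReal : ∫ y, |y| ∂gaussianReal 0 1 = √(2 / π) := by
  have h (y : ℝ) : (if 0 < |y| then |y| else 0) = |y| := by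
    split_ifs with hy
    · rfl
    · exact (le_antisymm (not_lt.mp hy) (abs_nonneg y)).symm
  have := integral_ite_lt_abs_abs_gaussianReal le_rfl
  simp only [h] at this
  simpa using this

lemma integral_ite_lt_abs_one_gaussianReal {t : ℝ} (ht : 0 ≤ t) :
    ∫ y, (if t < |y| then (1 : ℝ) else 0) ∂gaussianReal 0 1 = 2 * gaussQ t := by
  rw [integral_ite_lt_abs_gaussianReal (h := fun _ => 1)
    (by simpa using integrable_gaussianPDFReal 0 1) ht]
  simp_rw [mul_one, gaussianPDFReal_zero_one, integral_const_mul, gaussQ]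

lemma measurable_ite_lt_abs {g : ℝ → ℝ} (hg : Measurable g) (t : ℝ) :
    Measurable fun y => if t < |y| then g |y| else 0 :=
  Measurable.ite (measurableSet_lt measurable_const measurable_abs) (hg.comp measurable_abs)
    measurable_const

lemma memLp_ite_lt_abs {p : ENNReal} {ν : Measure ℝ} {g : ℝ → ℝ} (hgm : Measurable g)
    (hg : MemLp (fun y => g |y|) p ν) (t : ℝ) :
    MemLp (fun y => if t < |y| then g |y| else 0) p ν :=
  hg.of_le (measurable_ite_lt_abs hgm t).aestronglyMeasurable
    (.of_forall fun y => by split_ifs <;> simp)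

section WeakLaw

variable {ν : Measure ℝ} {f : ℝ → ℝ}

theorem measure_abs_sum_comp_sub_ge_le {Ω ι : Type*} [MeasurableSpace Ω] {μ : Measure Ω}
    [IsProbabilityMeasure μ] {s : Finset ι} {X : ι → Ω → ℝ} (hX : ∀ i ∈ s, Measurable (X i))
    (hindep : (s : Set ι).Pairwise fun i j => IndepFun (X i) (X j) μ)
    (hdist : ∀ i ∈ s, μ.map (X i) = ν) (hfm : Measurable f) (hf : MemLp f 2 ν)
    {c : ℝ} (hc : 0 < c) :
    μ {ω | c ≤ |∑ i ∈ s, f (X i ω) - #s * ∫ y, f y ∂ν|} ≤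
      ENNReal.ofReal (#s * variance f ν / c ^ 2) := by
  have hY (i) (hi : i ∈ s) : MemLp (f ∘ X i) 2 μ :=
    (hdist i hi ▸ hf).comp_of_map (hX i hi).aemeasurable
  have hmean : ∫ ω, ∑ i ∈ s, f (X i ω) ∂μ = #s * ∫ y, f y ∂ν := by
    rw [integral_finsetSum s (f := fun i ω => f (X i ω))
      fun i hi => (hY i hi).integrable one_le_two, ← nsmul_eq_mul, ← sum_const]
    refine sum_congr rfl fun i hi => ?_
    rw [← hdist i hi, integral_map (hX i hi).aemeasurable (hdist i hi ▸ hfm.aestronglyMeasurable)]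
  have hvar : variance (∑ i ∈ s, f ∘ X i) μ = #s * variance f ν := by
    rw [IndepFun.variance_sum hY fun i hi j hj hij => (hindep hi hj hij).comp hfm hfm,
      ← nsmul_eq_mul, ← sum_const]
    refine sum_congr rfl fun i hi => ?_
    rw [← hdist i hi, variance_map hfm.aemeasurable (hX i hi).aemeasurable]
  convert meas_ge_le_variance_div_sq (memLp_finsetSum' s hY) hc using 3
  · simp only [Finset.sum_apply, Function.comp_apply, hmean]
  · rw [hvar]

theorem tendsto_measure_abs_sum_comp_sub_ge {Ω ι : ℕ → Type*} [∀ k, MeasurableSpace (Ω k)]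
    {μ : ∀ k, Measure (Ω k)} [∀ k, IsProbabilityMeasure (μ k)] {s : ∀ k, Finset (ι k)}
    (hs : ∀ k, #(s k) = k) {X : ∀ k, ι k → Ω k → ℝ} (hX : ∀ k, ∀ i ∈ s k, Measurable (X k i))
    (hindep : ∀ k, (s k : Set (ι k)).Pairwise fun i j => IndepFun (X k i) (X k j) (μ k))
    (hdist : ∀ k, ∀ i ∈ s k, (μ k).map (X k i) = ν) (hfm : Measurable f) (hf : MemLp f 2 ν)
    {δ : ℝ} (hδ : 0 < δ) :
    Tendsto (fun k => μ k {ω | δ * k ≤ |∑ i ∈ s k, f (X k i ω) - k * ∫ y, f y ∂ν|})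
      atTop (nhds 0) := by
  have hbound : Tendsto (fun k : ℕ => ENNReal.ofReal (variance f ν / δ ^ 2 / k)) atTop
      (nhds 0) := by
    simpa using ENNReal.tendsto_ofReal (tendsto_const_div_atTop_nhds_zero_nat _)
  refine tendsto_of_tendsto_of_tendsto_of_le_of_le' tendsto_const_nhds hbound
    (.of_forall fun _ => zero_le) ?_
  filter_upwards [eventually_gt_atTop 0] with k hk
  have hk' : (0 : ℝ) < k := Nat.cast_pos.mpr hk
  have h := measure_abs_sum_comp_sub_ge_le (hX k) (hindep k) (hdist k) hfm hf (mul_pos hδ hk')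
  rw [hs k] at h
  refine h.trans_eq (congrArg ENNReal.ofReal ?_)
  field_simp

end WeakLaw

section MeasureTendstoZero

variable {α : Type*} {l : Filter α} {Ω : α → Type*} [∀ k, MeasurableSpace (Ω k)]
  {μ : ∀ k, Measure (Ω k)} {A B : ∀ k, Set (Ω k)}

lemma Filter.Tendsto.measure_union_zero (hA : Tendsto (fun k => μ k (A k)) l (nhds 0))
    (hB : Tendsto (fun k => μ k (B k)) l (nhds 0)) :
    Tendsto (fun k => μ k (A k ∪ B k)) l (nhds 0) :=
  tendsto_of_tendsto_of_tendsto_of_le_of_le tendsto_const_nhds (by simpa using hA.add hB)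
    (fun _ => zero_le) fun k => measure_union_le (A k) (B k)

lemma tendsto_measure_zero_of_eventually_subset (hB : Tendsto (fun k => μ k (B k)) l (nhds 0))
    (h : ∀ᶠ k in l, A k ⊆ B k) : Tendsto (fun k => μ k (A k)) l (nhds 0) :=
  tendsto_of_tendsto_of_tendsto_of_le_of_le' tendsto_const_nhds hB (.of_forall fun _ => zero_le)
    (h.mono fun _ hk => measure_mono hk)

end MeasureTendstoZero

section TopSet

variable {ι : Type*} [Fintype ι] [DecidableEq ι] {f : ι → ℝ} {L : Finset ι}

lemma filter_lt_subset_of_card_lt (hL : ∀ i ∈ L, ∀ j ∉ L, f j ≤ f i) {b : ℝ}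
    (h : #{i | b < f i} < #L) : ({i | b < f i} : Finset ι) ⊆ L := by
  intro i hi
  by_contra hiL
  have hsub : insert i L ⊆ ({i | b < f i} : Finset ι) := by
    intro j hj
    rcases mem_insert.mp hj with rfl | hjL
    · exact hi
    · exact mem_filter.mpr ⟨mem_univ j, (mem_filter.mp hi).2.trans_le (hL j hjL i hiL)⟩
  have := Finset.card_le_card hsub
  rw [card_insert_of_notMem hiL] at this
  omega

lemma subset_filter_lt_of_card_le (hL : ∀ i ∈ L, ∀ j ∉ L, f j ≤ f i) {c : ℝ}
    (h : #L ≤ #{i | c < f i}) : L ⊆ ({i | c < f i} : Finset ι) := by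
  intro i hiL
  by_contra hi
  have hic : f i ≤ c := by simpa using hi
  have hsub : ({i | c < f i} : Finset ι) ⊆ L.erase i := by
    intro j hj
    have hcj : c < f j := (mem_filter.mp hj).2
    refine mem_erase.mpr ⟨fun hji => (hji ▸ hcj).not_ge hic, ?_⟩
    by_contra hjL
    exact (hcj.trans_le (hL i hiL j hjL)).not_ge hic
  have := Finset.card_le_card hsub
  rw [card_erase_of_mem hiL] at this
  have : 0 < #L := card_pos.mpr ⟨i, hiL⟩
  omega

lemma sum_filter_lt_le_sum_le_sum_filter_lt (hf : ∀ i, 0 ≤ f i)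
    (hL : ∀ i ∈ L, ∀ j ∉ L, f j ≤ f i) {b c : ℝ} (hb : #{i | b < f i} < #L)
    (hc : #L ≤ #{i | c < f i}) :
    ∑ i with b < f i, f i ≤ ∑ i ∈ L, f i ∧ ∑ i ∈ L, f i ≤ ∑ i with c < f i, f i :=
  ⟨sum_le_sum_of_subset_of_nonneg (filter_lt_subset_of_card_lt hL hb) fun i _ _ => hf i,
    sum_le_sum_of_subset_of_nonneg (subset_filter_lt_of_card_le hL hc) fun i _ _ => hf i⟩

end TopSet

lemma abs_div_sub_le_of_abs_sub_le {S U k m q δ : ℝ} (hk : 0 < k) (hm : 0 < m) (hq₀ : 0 ≤ q)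
    (hq₁ : q ≤ 1) (hδ : δ ≤ m / 2) (hS : |S - k * m| ≤ δ * k)
    (hU : |U - k * (m * q)| ≤ 2 * δ * k) :
    |(S - U) / S - (1 - q)| ≤ 6 * δ / m := by
  have hδ₀ : 0 ≤ δ := nonneg_of_mul_nonneg_left ((abs_nonneg _).trans hS) hk
  have hSlow : k * m / 2 ≤ S := by
    have := (abs_le.mp hS).1
    nlinarith
  have hSpos : 0 < S := lt_of_lt_of_le (by positivity) hSlow
  have hnum : |q * S - U| ≤ 3 * δ * k := by
    calc |q * S - U| = |q * (S - k * m) - (U - k * (m * q))| := by ring_nf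
      _ ≤ q * |S - k * m| + |U - k * (m * q)| := by
        rw [← abs_of_nonneg hq₀, ← abs_mul, abs_of_nonneg hq₀]; exact abs_sub _ _
      _ ≤ 1 * (δ * k) + 2 * δ * k := by gcongr
      _ = 3 * δ * k := by ring
  rw [show (S - U) / S - (1 - q) = (q * S - U) / S by field_simp; ring, abs_div,
    abs_of_pos hSpos, div_le_div_iff₀ hSpos hm]
  calc |q * S - U| * m ≤ 3 * δ * k * m := by gcongr
    _ = 6 * δ * (k * m / 2) := by ring
    _ ≤ 6 * δ * S := by gcongr

lemma lt_floor_mul_of_abs_sub_lt {N : ℕ} {k p γ δ : ℝ} (hk : 0 ≤ k) (hN : |N - k * p| < δ * k)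
    (hδ : δ ≤ (γ - p) / 2) (h2 : 2 ≤ k * (γ - p)) : N < ⌊γ * k⌋₊ := by
  have hδk : δ * k ≤ (γ - p) / 2 * k := mul_le_mul_of_nonneg_right hδ hk
  refine Nat.lt_of_lt_of_le (Nat.lt_succ_self N) (Nat.le_floor ?_)
  push_cast
  linarith [(abs_lt.mp hN).2]

lemma floor_mul_le_of_abs_sub_lt {N : ℕ} {k p γ δ : ℝ} (hk : 0 ≤ k) (hN : |N - k * p| < δ * k)
    (hδ : δ ≤ p - γ) : ⌊γ * k⌋₊ ≤ N := by
  have hδk : δ * k ≤ (p - γ) * k := mul_le_mul_of_nonneg_right hδ hk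
  exact Nat.floor_le_of_le (by linarith [(abs_lt.mp hN).1])

lemma abs_sum_compl_div_sum_sub_le {ι : Type*} [Fintype ι] [DecidableEq ι] {v : ι → ℝ}
    {L : Finset ι} (hL : ∀ i ∈ L, ∀ j ∉ L, |v j| ≤ |v i|) {k m₀ q δ b c mb mc : ℝ}
    (hk : 0 < k) (hm₀ : 0 < m₀) (hq₀ : 0 ≤ q) (hq₁ : q ≤ 1) (hδ : δ ≤ m₀ / 2)
    (hb : #{i | b < |v i|} < #L) (hc : #L ≤ #{i | c < |v i|})
    (hS : |∑ i, |v i| - k * m₀| < δ * k)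
    (hTb : |∑ i with b < |v i|, |v i| - k * mb| < δ * k) (hmb : |mb - m₀ * q| < δ)
    (hTc : |∑ i with c < |v i|, |v i| - k * mc| < δ * k) (hmc : |mc - m₀ * q| < δ) :
    |(∑ i ∈ Lᶜ, |v i|) / ∑ i, |v i| - (1 - q)| ≤ 6 * δ / m₀ := by
  obtain ⟨hbL, hLc⟩ :=
    sum_filter_lt_le_sum_le_sum_filter_lt (fun i => abs_nonneg (v i)) hL hb hc
  have hkb : |k * mb - k * (m₀ * q)| < δ * k := by
    rw [← mul_sub, abs_mul, abs_of_pos hk, mul_comm]; exact mul_lt_mul_of_pos_right hmb hk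
  have hkc : |k * mc - k * (m₀ * q)| < δ * k := by
    rw [← mul_sub, abs_mul, abs_of_pos hk, mul_comm]; exact mul_lt_mul_of_pos_right hmc hk
  rw [eq_sub_of_add_eq (sum_compl_add_sum L fun i => |v i|)]
  refine abs_div_sub_le_of_abs_sub_le hk hm₀ hq₀ hq₁ hδ hS.le (abs_le.mpr ⟨?_, ?_⟩)
  · linarith [(abs_lt.mp hTb).1, (abs_lt.mp hkb).1]
  · linarith [(abs_lt.mp hTc).2, (abs_lt.mp hkc).2]

structure IsSparseGaussian {ι Ω : ℕ → Type*} [∀ k, MeasurableSpace (Ω k)]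
    (μ : ∀ k, Measure (Ω k)) (x : ∀ k, Ω k → ι k → ℝ) (K : ∀ k, Finset (ι k)) : Prop where
  card_eq : ∀ k, #(K k) = k
  eq_zero : ∀ k ω, ∀ i ∉ K k, x k ω i = 0
  measurable : ∀ k i, Measurable fun ω => x k ω i
  indep : ∀ k, iIndepFun (fun i : {i // i ∈ K k} => fun ω => x k ω i.1) (μ k)
  map_eq : ∀ k, ∀ i ∈ K k, (μ k).map (fun ω => x k ω i) = gaussianReal 0 1

namespace IsSparseGaussian

variable {ι Ω : ℕ → Type*} [∀ k, Fintype (ι k)] [∀ k, MeasurableSpace (Ω k)]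
  {μ : ∀ k, Measure (Ω k)} [∀ k, IsProbabilityMeasure (μ k)] {x : ∀ k, Ω k → ι k → ℝ}
  {K : ∀ k, Finset (ι k)}

theorem tendsto_measure_abs_sum_sub_ge (h : IsSparseGaussian μ x K) {f : ℝ → ℝ}
    (hfm : Measurable f) (hf : MemLp f 2 (gaussianReal 0 1)) (hf₀ : f 0 = 0) {η : ℝ}
    (hη : 0 < η) :
    Tendsto (fun k => μ k {ω | η * k ≤
      |∑ i, f (x k ω i) - k * ∫ y, f y ∂gaussianReal 0 1|}) atTop (nhds 0) := by
  refine (tendsto_measure_abs_sum_comp_sub_ge h.card_eq (fun k i _ => h.measurable k i)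
    (fun k i hi j hj hij => (h.indep k).indepFun (i := ⟨i, hi⟩) (j := ⟨j, hj⟩)
      (by simpa using hij)) h.map_eq hfm hf hη).congr fun k => ?_
  congr with ω
  rw [sum_subset (subset_univ _) fun i _ hi => by rw [h.eq_zero k ω i hi, hf₀]]

theorem tendsto_measure_abs_sum_abs_sub_ge (h : IsSparseGaussian μ x K) {η : ℝ} (hη : 0 < η) :
    Tendsto (fun k => μ k {ω | η * k ≤ |∑ i, |x k ω i| - k * √(2 / π)|}) atTop (nhds 0) := by
  simpa only [integral_abs_gaussianReal] using
    h.tendsto_measure_abs_sum_sub_ge measurable_abs (memLp_id_gaussianReal 2).norm abs_zero hη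

theorem tendsto_measure_abs_sum_ite_abs_sub_ge (h : IsSparseGaussian μ x K) {t η : ℝ}
    (ht : 0 ≤ t) (hη : 0 < η) :
    Tendsto (fun k => μ k {ω | η * k ≤ |∑ i, (if t < |x k ω i| then |x k ω i| else 0) -
      k * (√(2 / π) * exp (-(t ^ 2) / 2))|}) atTop (nhds 0) := by
  simpa only [integral_ite_lt_abs_abs_gaussianReal ht] using
    h.tendsto_measure_abs_sum_sub_ge (measurable_ite_lt_abs measurable_id' t)
      (memLp_ite_lt_abs measurable_id' (memLp_id_gaussianReal 2).norm t)
      (by simp [ht.not_gt]) hη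

theorem tendsto_measure_abs_sum_ite_one_sub_ge (h : IsSparseGaussian μ x K) {t η : ℝ}
    (ht : 0 ≤ t) (hη : 0 < η) :
    Tendsto (fun k => μ k {ω | η * k ≤ |∑ i, (if t < |x k ω i| then (1 : ℝ) else 0) -
      k * (2 * gaussQ t)|}) atTop (nhds 0) := by
  simpa only [integral_ite_lt_abs_one_gaussianReal ht] using
    h.tendsto_measure_abs_sum_sub_ge (measurable_ite_lt_abs measurable_const t)
      (memLp_ite_lt_abs measurable_const (memLp_const 1) t) (by simp [ht.not_gt]) hη

end IsSparseGaussian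

lemma exists_thresholds_near {m : ℝ → ℝ} (hm : Continuous m) {a γ δ : ℝ} (hγ : γ < 1)
    (ha : gaussQ a = γ / 2) (hδ : 0 < δ) :
    ∃ b c, 0 < b ∧ 0 < c ∧ 2 * gaussQ b < γ ∧ γ < 2 * gaussQ c ∧
      |m b - m a| < δ ∧ |m c - m a| < δ := by
  have ha₀ : 0 < a := gaussQ_strictAnti.lt_iff_gt.mp (by rw [ha, gaussQ_zero]; linarith)
  have hnear : ∀ᶠ t in nhds a, 0 < t ∧ |m t - m a| < δ :=
    (eventually_gt_nhds ha₀).and (Metric.tendsto_nhds.mp (hm.tendsto a) δ hδ)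
  obtain ⟨b, hab, hb₀, hmb⟩ := hnear.exists_gt
  obtain ⟨c, hca, hc₀, hmc⟩ := hnear.exists_lt
  exact ⟨b, c, hb₀, hc₀, by linarith [gaussQ_strictAnti hab], by linarith [gaussQ_strictAnti hca],
    hmb, hmc⟩

theorem stmt6_general (γ : ℝ) (hγ : γ ∈ Set.Ioo (0 : ℝ) 1)
    (n : ℕ → ℕ)
    (Ω : ℕ → Type*) [∀ k, MeasurableSpace (Ω k)]
    (μ : ∀ k, Measure (Ω k)) [∀ k, IsProbabilityMeasure (μ k)]
    (x : ∀ k, Ω k → Fin (n k) → ℝ)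
    (K : ∀ k, Finset (Fin (n k))) (hKcard : ∀ k, (K k).card = k)
    (hzero : ∀ k, ∀ ω, ∀ i ∉ K k, x k ω i = 0)
    (hmeas : ∀ k i, Measurable (fun ω => x k ω i))
    (hindep : ∀ k, iIndepFun
      (fun (i : {i // i ∈ K k}) => fun ω => x k ω i.1) (μ k))
    (hdist : ∀ k, ∀ i ∈ K k, Measure.map (fun ω => x k ω i) (μ k) = gaussianReal 0 1)
    (K₁ : ∀ k, Ω k → Finset (Fin (n k)))
    (hK₁card : ∀ k ω, (K₁ k ω).card = ⌊γ * k⌋₊)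
    (hK₁supp : ∀ k ω, ∀ i ∈ K₁ k ω, ∀ j ∉ K₁ k ω, |x k ω j| ≤ |x k ω i|)
    (a : ℝ) (ha : gaussQ a = γ / 2) :
    ∃ ε₀ > 0, ∀ ε : ℝ, 0 < ε → ε < ε₀ →
      Tendsto
        (fun k => μ k {ω | |(∑ i ∈ (K₁ k ω)ᶜ, |x k ω i|) / (∑ i, |x k ω i|)
            - (1 - Real.exp (-(a ^ 2) / 2))| > ε})
        atTop (nhds 0) := by
  refine ⟨1, one_pos, fun ε hε _ => ?_⟩
  have hm₀ : 0 < √(2 / π) := by positivity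
  -- `δ ≤ √(2/π)/2` keeps `∑ |xᵢ|` away from `0`, and `6δ/√(2/π) < ε` is the final error.
  set δ := min (√(2 / π) / 2) (ε * √(2 / π) / 7)
  have hδ : 0 < δ := by positivity
  obtain ⟨b, c, hb₀, hc₀, hpb, hpc, hmb, hmc⟩ :=
    exists_thresholds_near (m := fun t => √(2 / π) * exp (-(t ^ 2) / 2)) (by fun_prop) hγ.2 ha hδ
  -- Counting slack: `N(b) < ⌊γk⌋ ≤ N(c)` as soon as `k (γ - 2Q(b)) ≥ 2`.
  set δ₂ := min ((γ - 2 * gaussQ b) / 2) (2 * gaussQ c - γ)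
  have hδ₂ : 0 < δ₂ := lt_min (by linarith) (by linarith)
  have hx : IsSparseGaussian μ x K := ⟨hKcard, hzero, hmeas, hindep, hdist⟩
  refine tendsto_measure_zero_of_eventually_subset
    (((((hx.tendsto_measure_abs_sum_abs_sub_ge hδ).measure_union_zero
      (hx.tendsto_measure_abs_sum_ite_abs_sub_ge hb₀.le hδ)).measure_union_zero
      (hx.tendsto_measure_abs_sum_ite_abs_sub_ge hc₀.le hδ)).measure_union_zero
      (hx.tendsto_measure_abs_sum_ite_one_sub_ge hb₀.le hδ₂)).measure_union_zero
      (hx.tendsto_measure_abs_sum_ite_one_sub_ge hc₀.le hδ₂)) ?_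
  filter_upwards [eventually_gt_atTop 0, (tendsto_natCast_atTop_atTop.atTop_mul_const
    (sub_pos.2 hpb)).eventually_ge_atTop 2] with k hk hk₂ ω hω
  by_contra hgood
  simp only [Set.mem_union, Set.mem_ofPred_eq, not_or, not_le] at hgood
  obtain ⟨⟨⟨⟨hSk, hTb⟩, hTc⟩, hNb⟩, hNc⟩ := hgood
  rw [← sum_filter] at hTb hTc
  rw [sum_boole] at hNb hNc
  have hk' : (0 : ℝ) < k := Nat.cast_pos.mpr hk
  have hclose := abs_sum_compl_div_sum_sub_le (hK₁supp k ω) hk' hm₀ (exp_pos _).le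
    (exp_le_one_iff.mpr (by linarith [sq_nonneg a])) (min_le_left _ _)
    (hK₁card k ω ▸ lt_floor_mul_of_abs_sub_lt hk'.le hNb (min_le_left _ _) hk₂)
    (hK₁card k ω ▸ floor_mul_le_of_abs_sub_lt hk'.le hNc (min_le_right _ _)) hSk hTb hmb hTc hmc
  have hδε : 6 * δ / √(2 / π) < ε := by
    rw [div_lt_iff₀ hm₀]
    linarith [min_le_right (√(2 / π) / 2) (ε * √(2 / π) / 7), mul_pos hε hm₀]
  exact (hclose.trans_lt hδε).not_gt hω

/-- For random `k`-sparse Gaussian vectors, with `k₁ = ⌊γk⌋` and `K₁` a `k₁`-support of `x`,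
the ratio `‖x_{K̄₁}‖₁/‖x‖₁` concentrates around `1 − exp(−Ψ(γ/2)²/2)` as `k → ∞`. -/
theorem stmt6 (γ : ℝ) (hγ : γ ∈ Set.Ioo (0 : ℝ) 1)
    (n : ℕ → ℕ) (hn : ∀ k, k ≤ n k)
    (Ω : ℕ → Type*) [∀ k, MeasurableSpace (Ω k)]
    (μ : ∀ k, Measure (Ω k)) [∀ k, IsProbabilityMeasure (μ k)]
    (x : ∀ k, Ω k → Fin (n k) → ℝ)
    (K : ∀ k, Finset (Fin (n k))) (hKcard : ∀ k, (K k).card = k)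
    (hzero : ∀ k, ∀ ω, ∀ i ∉ K k, x k ω i = 0)
    (hnonzero : ∀ k, ∀ ω, ∀ i ∈ K k, x k ω i ≠ 0)
    (hmeas : ∀ k i, Measurable (fun ω => x k ω i))
    (hindep : ∀ k, iIndepFun
      (fun (i : {i // i ∈ K k}) => fun ω => x k ω i.1) (μ k))
    (hdist : ∀ k, ∀ i ∈ K k, Measure.map (fun ω => x k ω i) (μ k) = gaussianReal 0 1)
    (K₁ : ∀ k, Ω k → Finset (Fin (n k)))
    (hK₁card : ∀ k ω, (K₁ k ω).card = ⌊γ * k⌋₊)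
    (hK₁supp : ∀ k ω, ∀ i ∈ K₁ k ω, ∀ j ∉ K₁ k ω, |x k ω j| ≤ |x k ω i|)
    (a : ℝ) (ha : gaussQ a = γ / 2) :
    ∃ ε₀ > 0, ∀ ε : ℝ, 0 < ε → ε < ε₀ →
      Tendsto
        (fun k => μ k {ω | |(∑ i ∈ (K₁ k ω)ᶜ, |x k ω i|) / (∑ i, |x k ω i|)
            - (1 - Real.exp (-(a ^ 2) / 2))| > ε})
        atTop (nhds 0) :=
  stmt6_general γ hγ n Ω μ x K hKcard hzero hmeas hindep hdist K₁ hK₁card hK₁supp a ha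
end

section
/- Let f : ℝ → ℝ be a continuous, symmetric (f(−x) = f(x)) probability density function, positive on (0,∞), such that ∫_a^∞ x² f(x) dx < ∞ for every a > 0. Let X, X_1, …, X_N be i.i.d. random variables with density f, let S_N = ∑_{i=1}^N |X_i|, and for 1 ≤ M < N let S_M be the sum of the M largest values among |X_1|,…,|X_N|. Fix γ ∈ (0,1) and set M = ⌊γN⌋. Then for every sufficiently small ε > 0, P( | S_M/S_N − (1 − 2 ∫_0^{Ψ_f(γ/2)} x f(x) dx / E|X| ) | > ε ) → 0 as N → ∞. -/
/-!
For a threshold `c ≥ 0` let `B_c` be the set of indices `i < N` with `|X_i| > c`. If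
`#B_c ≤ M`, then `B_c` extends to an `M`-set, so `S_M ≥ ∑_{B_c} |X_i|`; if `#B_c ≥ M`, an
exchange argument gives `S_M ≤ ∑_{B_c} |X_i|`. By the strong law of large numbers, almost surely
and simultaneously for all rational `c`, `#B_c / N → P(|X| > c)` and
`∑_{B_c} |X_i| / N → E[|X|; |X| > c]`, while `S_N / N → E|X|`. Since `P(|X| > c)` is strictly
decreasing and equals `γ` at `c = a`, and `E[|X|; |X| > c]` is continuous in `c`, rational
thresholds just above and below `a` squeeze `S_M / N` around
`E[|X|; |X| > a] = E|X| - 2 ∫₀^a x f(x) dx`. So `S_M / S_N` converges almost surely, hence in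
probability, for every `ε > 0`.
-/

open Finset MeasureTheory ProbabilityTheory Filter

/-- `topSum N M y` is the sum of the `M` largest values among `y 0, …, y (N-1)`
(for nonnegative `y`, realized as the maximum of `∑_{i ∈ T} y i` over `M`-subsets
`T` of `{0, …, N-1}`). -/
noncomputable def topSum (N M : ℕ) (y : ℕ → ℝ) : ℝ :=
  if h : ((Finset.range N).powersetCard M).Nonempty then
    ((Finset.range N).powersetCard M).sup' h (fun T => ∑ i ∈ T, y i)
  else 0

open scoped Topology

section TopSum

variable {N M : ℕ} {y : ℕ → ℝ}

lemma sum_le_topSum (hy : ∀ i, 0 ≤ y i) {B : Finset ℕ} (hBN : B ⊆ range N) (hBM : #B ≤ M)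
    (hMN : M ≤ N) : ∑ i ∈ B, y i ≤ topSum N M y := by
  obtain ⟨T, hBT, hTN, hT⟩ := exists_subsuperset_card_eq hBN hBM (by simpa using hMN)
  rw [topSum, dif_pos (powersetCard_nonempty.2 (by simpa using hMN))]
  calc ∑ i ∈ B, y i ≤ ∑ i ∈ T, y i := sum_le_sum_of_subset_of_nonneg hBT fun i _ _ => hy i
    _ ≤ _ := le_sup' (fun T => ∑ i ∈ T, y i) (mem_powersetCard.2 ⟨hTN, hT⟩)

lemma topSum_le_sum_filter_lt {c : ℝ} (hc : 0 ≤ c) (hM : M ≤ #{i ∈ range N | c < y i}) :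
    topSum N M y ≤ ∑ i ∈ range N with c < y i, y i := by
  set B := {i ∈ range N | c < y i}
  have hMN : M ≤ #(range N) := hM.trans (card_le_card (filter_subset _ _))
  rw [topSum, dif_pos (powersetCard_nonempty.2 hMN)]
  refine sup'_le _ _ fun T hT => ?_
  obtain ⟨hTN, hTM⟩ := mem_powersetCard.1 hT
  -- Exchange: every index of `T \ B` carries a value `≤ c`, every index of `B \ T` one `> c`.
  have hout : ∑ i ∈ T \ B, y i ≤ #(T \ B) * c := by
    rw [← nsmul_eq_mul]
    refine sum_le_card_nsmul _ _ _ fun i hi => not_lt.1 fun hci => (Finset.mem_sdiff.1 hi).2 ?_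
    exact mem_filter.2 ⟨hTN (Finset.mem_sdiff.1 hi).1, hci⟩
  have hin : #(B \ T) * c ≤ ∑ i ∈ B \ T, y i := by
    rw [← nsmul_eq_mul]
    exact card_nsmul_le_sum _ _ _ fun i hi => (mem_filter.1 (Finset.mem_sdiff.1 hi).1).2.le
  have hcard : (#(T \ B) : ℝ) ≤ #(B \ T) := by
    exact_mod_cast card_sdiff_le_card_sdiff_iff.2 (hTM.trans_le hM)
  have := sum_sdiff_sub_sum_sdiff (s₁ := T) (s₂ := B) (f := y)
  linarith [mul_le_mul_of_nonneg_right hcard hc]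

end TopSum

section Sandwich

variable {y : ℕ → ℝ} {p L : ℝ → ℝ} {γ a : ℝ}

lemma eventually_lt_topSum_floor_mul_div (hy : ∀ i, 0 ≤ y i) (hγ : γ ≤ 1)
    (hcount : ∀ q : ℚ, Tendsto (fun n : ℕ => (#{i ∈ range n | (q : ℝ) < y i} : ℝ) / n)
      atTop (𝓝 (p q)))
    (hsum : ∀ q : ℚ, Tendsto (fun n : ℕ => (∑ i ∈ range n with (q : ℝ) < y i, y i) / n)
      atTop (𝓝 (L q)))
    (hp : ∀ c, a < c → p c < γ) (hL : ContinuousAt L a) {b : ℝ} (hb : b < L a) :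
    ∀ᶠ n : ℕ in atTop, b < topSum n ⌊γ * n⌋₊ y / n := by
  obtain ⟨u, hau, hu⟩ := mem_nhdsGT_iff_exists_Ioo_subset.1
    (nhdsWithin_le_nhds (hL.eventually (lt_mem_nhds hb)))
  obtain ⟨q, haq, hqu⟩ := exists_rat_btwn (Set.mem_Ioi.1 hau)
  filter_upwards [(hcount q).eventually (gt_mem_nhds (hp q haq)),
    (hsum q).eventually (lt_mem_nhds (hu ⟨haq, hqu⟩)), eventually_gt_atTop 0]
    with n hcount_n hsum_n hn
  have hn' : (0 : ℝ) < n := Nat.cast_pos.2 hn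
  have hB : #{i ∈ range n | (q : ℝ) < y i} ≤ ⌊γ * n⌋₊ :=
    Nat.le_floor ((div_lt_iff₀ hn').1 hcount_n).le
  have hMN : ⌊γ * n⌋₊ ≤ n := Nat.floor_le_of_le (mul_le_of_le_one_left hn'.le hγ)
  exact hsum_n.trans_le <| div_le_div_of_nonneg_right
    (sum_le_topSum hy (filter_subset _ _) hB hMN) hn'.le

lemma eventually_topSum_floor_mul_div_lt (ha : 0 < a)
    (hcount : ∀ q : ℚ, Tendsto (fun n : ℕ => (#{i ∈ range n | (q : ℝ) < y i} : ℝ) / n)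
      atTop (𝓝 (p q)))
    (hsum : ∀ q : ℚ, Tendsto (fun n : ℕ => (∑ i ∈ range n with (q : ℝ) < y i, y i) / n)
      atTop (𝓝 (L q)))
    (hp : ∀ c, 0 < c → c < a → γ < p c) (hL : ContinuousAt L a) {b : ℝ} (hb : L a < b) :
    ∀ᶠ n : ℕ in atTop, topSum n ⌊γ * n⌋₊ y / n < b := by
  obtain ⟨l, hla, hl⟩ := mem_nhdsLT_iff_exists_Ioo_subset.1
    (inter_mem (nhdsWithin_le_nhds (hL.eventually (gt_mem_nhds hb)))
      (Ioo_mem_nhdsLT ha))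
  obtain ⟨q, hlq, hqa⟩ := exists_rat_btwn (Set.mem_Iio.1 hla)
  obtain ⟨hLq, hq0, -⟩ := hl ⟨hlq, hqa⟩
  filter_upwards [(hcount q).eventually (lt_mem_nhds (hp q hq0 hqa)),
    (hsum q).eventually (gt_mem_nhds hLq), eventually_gt_atTop 0]
    with n hcount_n hsum_n hn
  have hn' : (0 : ℝ) < n := Nat.cast_pos.2 hn
  have hB : ⌊γ * n⌋₊ ≤ #{i ∈ range n | (q : ℝ) < y i} :=
    Nat.floor_le_of_le ((lt_div_iff₀ hn').1 hcount_n).le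
  exact (div_le_div_of_nonneg_right (topSum_le_sum_filter_lt hq0.le hB) hn'.le).trans_lt hsum_n

lemma tendsto_topSum_floor_mul_div_sum (hy : ∀ i, 0 ≤ y i) (hγ : γ ≤ 1) (ha : 0 < a)
    (hcount : ∀ q : ℚ, Tendsto (fun n : ℕ => (#{i ∈ range n | (q : ℝ) < y i} : ℝ) / n)
      atTop (𝓝 (p q)))
    (hsum : ∀ q : ℚ, Tendsto (fun n : ℕ => (∑ i ∈ range n with (q : ℝ) < y i, y i) / n)
      atTop (𝓝 (L q)))
    (hp_lt : ∀ c, a < c → p c < γ) (hp_gt : ∀ c, 0 < c → c < a → γ < p c)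
    (hL : ContinuousAt L a) {E : ℝ} (hE : E ≠ 0)
    (htotal : Tendsto (fun n : ℕ => (∑ i ∈ range n, y i) / n) atTop (𝓝 E)) :
    Tendsto (fun n : ℕ => topSum n ⌊γ * n⌋₊ y / ∑ i ∈ range n, y i) atTop (𝓝 (L a / E)) := by
  have htop : Tendsto (fun n : ℕ => topSum n ⌊γ * n⌋₊ y / n) atTop (𝓝 (L a)) :=
    tendsto_order.2 ⟨fun b hb => eventually_lt_topSum_floor_mul_div hy hγ hcount hsum hp_lt hL hb,
      fun b hb => eventually_topSum_floor_mul_div_lt ha hcount hsum hp_gt hL hb⟩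
  refine (htop.div htotal hE).congr' ?_
  filter_upwards [eventually_gt_atTop 0] with n hn
  exact div_div_div_cancel_right₀ (Nat.cast_ne_zero.2 hn.ne') _ _

end Sandwich

/-- For a density `f` of `X`, `absTailIntegral f c = P(|X| > c)` and
`absTailIntegral (fun t => |t| * f t) c = E[|X|; |X| > c]`. -/
noncomputable def absTailIntegral (g : ℝ → ℝ) (c : ℝ) : ℝ :=
  ∫ t, {t : ℝ | c < |t|}.indicator g t

section AbsTail

variable {g : ℝ → ℝ}

lemma integral_eq_two_mul_integral_Ioi_of_even (heven : ∀ t, g (-t) = g t) :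
    ∫ t, g t = 2 * ∫ t in Set.Ioi 0, g t := by
  have hg : ∀ t, g |t| = g t := fun t => by
    rcases abs_choice t with h | h <;> simp [h, heven]
  simpa only [hg] using integral_comp_abs (f := g)

lemma integrable_of_even_of_integrableOn_Ioi (heven : ∀ t, g (-t) = g t)
    (hg : IntegrableOn g (Set.Ioi 0)) : Integrable g := by
  have hIic : IntegrableOn g (Set.Iic 0) := by
    rw [← Measure.map_neg_eq_self (volume : Measure ℝ),
      measurableEmbedding_neg.integrableOn_map_iff]
    simp_rw [Function.comp_def, heven, Set.neg_preimage, Set.neg_Iic, neg_zero]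
    exact Iff.mpr integrableOn_Ici_iff_integrableOn_Ioi hg
  rw [← integrableOn_univ, ← Set.Iic_union_Ioi (a := 0)]
  exact hIic.union hg

lemma absTailIntegral_eq_of_even (heven : ∀ t, g (-t) = g t) {c : ℝ} (hc : 0 ≤ c) :
    absTailIntegral g c = 2 * ∫ t in Set.Ioi c, g t := by
  have hs : MeasurableSet {t : ℝ | c < |t|} := measurableSet_lt measurable_const measurable_abs
  have hset : Set.Ioi 0 ∩ {t : ℝ | c < |t|} = Set.Ioi c := by
    ext t
    refine ⟨fun ⟨(ht : 0 < t), hct⟩ => ?_,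
      fun hct => ⟨hc.trans_lt hct, hct.trans_le (le_abs_self t)⟩⟩
    exact (abs_of_pos ht ▸ hct : c < t)
  rw [absTailIntegral, integral_eq_two_mul_integral_Ioi_of_even
    (fun t => by simp [Set.indicator_apply, heven]), setIntegral_indicator hs, hset]

lemma absTailIntegral_zero_of_even (heven : ∀ t, g (-t) = g t) :
    absTailIntegral g 0 = ∫ t, g t := by
  rw [absTailIntegral_eq_of_even heven le_rfl, integral_eq_two_mul_integral_Ioi_of_even heven]

lemma absTailIntegral_sub_absTailIntegral_of_even (heven : ∀ t, g (-t) = g t)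
    (hg : Integrable g) {c c' : ℝ} (hc : 0 ≤ c) (hcc' : c ≤ c') :
    absTailIntegral g c - absTailIntegral g c' = 2 * ∫ t in c..c', g t := by
  rw [absTailIntegral_eq_of_even heven hc, absTailIntegral_eq_of_even heven (hc.trans hcc'),
    ← intervalIntegral.integral_Ioi_sub_Ioi hg.integrableOn hcc']
  ring

lemma absTailIntegral_strictAntiOn (heven : ∀ t, g (-t) = g t) (hg : Integrable g)
    (hpos : ∀ t, 0 < t → 0 < g t) : StrictAntiOn (absTailIntegral g) (Set.Ici 0) := by
  intro c hc c' _ hcc'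
  have hpos_int : 0 < ∫ t in c..c', g t :=
    intervalIntegral.intervalIntegral_pos_of_pos_on hg.intervalIntegrable
      (fun t ht => hpos t (lt_of_le_of_lt hc ht.1)) hcc'
  linarith [absTailIntegral_sub_absTailIntegral_of_even heven hg hc hcc'.le]

lemma continuous_absTailIntegral (hg : Integrable g) : Continuous (absTailIntegral g) := by
  refine continuous_iff_continuousAt.2 fun c => continuousAt_of_dominated
    (bound := fun t => ‖g t‖) ?_ ?_ hg.norm ?_
  · exact Eventually.of_forall fun x => hg.aestronglyMeasurable.indicator
      (measurableSet_lt measurable_const measurable_abs)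
  · exact Eventually.of_forall fun x => Eventually.of_forall fun t =>
      norm_indicator_le_norm_self _ _
  · -- Away from the null set `{|t| = c}` the integrand is locally constant in the threshold.
    have hnull : ∀ᵐ t : ℝ, t ∉ ({c, -c} : Set ℝ) :=
      measure_eq_zero_iff_ae_notMem.1 ((Set.toFinite _).measure_zero _)
    filter_upwards [hnull] with t ht
    have htc : |t| ≠ c := fun h => ht ((abs_eq (h ▸ abs_nonneg t)).1 h)
    rcases htc.lt_or_gt with h | h
    · refine continuousAt_const.congr (f := fun _ => 0) ?_
      filter_upwards [lt_mem_nhds h] with x hx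
      exact (Set.indicator_of_notMem (show t ∉ {t : ℝ | x < |t|} from not_lt.2 hx.le) g).symm
    · refine continuousAt_const.congr (f := fun _ => g t) ?_
      filter_upwards [gt_mem_nhds h] with x hx
      exact (Set.indicator_of_mem (show t ∈ {t : ℝ | x < |t|} from hx) g).symm

end AbsTail

section Density

variable {α : Type*} [MeasurableSpace α] {ν : Measure α} {f : α → ℝ}

lemma integral_withDensity_ofReal (hf : Measurable f) (hf0 : ∀ t, 0 ≤ f t) (g : α → ℝ) :
    ∫ t, g t ∂ν.withDensity (fun t => ENNReal.ofReal (f t)) = ∫ t, f t * g t ∂ν := by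
  rw [integral_withDensity_eq_integral_toReal_smul hf.ennreal_ofReal
    (Eventually.of_forall fun _ => ENNReal.ofReal_lt_top)]
  simp only [ENNReal.toReal_ofReal (hf0 _), smul_eq_mul]

lemma integrable_withDensity_ofReal_iff (hf : Measurable f) (hf0 : ∀ t, 0 ≤ f t)
    {g : α → ℝ} :
    Integrable g (ν.withDensity (fun t => ENNReal.ofReal (f t))) ↔
      Integrable (fun t => f t * g t) ν := by
  rw [integrable_withDensity_iff_integrable_smul' hf.ennreal_ofReal
    (Eventually.of_forall fun _ => ENNReal.ofReal_lt_top)]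
  simp only [ENNReal.toReal_ofReal (hf0 _), smul_eq_mul]

end Density

section Probability

variable {Ω : Type*} [MeasurableSpace Ω] {μ : Measure Ω}

lemma ae_tendsto_average_comp {α : Type*} [MeasurableSpace α] {ν : Measure α}
    {X : ℕ → Ω → α} (hmeas : ∀ i, Measurable (X i)) (hindep : iIndepFun X μ)
    (hlaw : ∀ i, Measure.map (X i) μ = ν) {g : α → ℝ} (hg : Measurable g)
    (hint : Integrable g ν) :
    ∀ᵐ ω ∂μ, Tendsto (fun n : ℕ => (∑ i ∈ range n, g (X i ω)) / n) atTop
      (𝓝 (∫ x, g x ∂ν)) := by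
  have hint0 : Integrable (fun ω => g (X 0 ω)) μ := by
    rw [← hlaw 0] at hint
    exact (integrable_map_measure hg.aestronglyMeasurable (hmeas 0).aemeasurable).1 hint
  have hident : ∀ i, IdentDistrib (fun ω => g (X i ω)) (fun ω => g (X 0 ω)) μ μ := fun i =>
    IdentDistrib.comp ⟨(hmeas i).aemeasurable, (hmeas 0).aemeasurable, by rw [hlaw, hlaw]⟩ hg
  have hmean : μ[fun ω => g (X 0 ω)] = ∫ x, g x ∂ν := by
    rw [← hlaw 0, integral_map (hmeas 0).aemeasurable hg.aestronglyMeasurable]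
  simpa only [hmean] using strong_law_ae_real (fun i ω => g (X i ω)) hint0
    (fun i j hij => (hindep.indepFun hij).comp hg hg) hident

lemma measurable_topSum {y : ℕ → Ω → ℝ} (hy : ∀ i, Measurable (y i)) (N M : ℕ) :
    Measurable fun ω => topSum N M (fun i => y i ω) := by
  unfold topSum
  split_ifs with h
  · convert measurable_sup' h fun T _ => measurable_sum T fun i _ => hy i using 1
    ext ω
    rw [Finset.sup'_apply]
  · exact measurable_const

lemma tendsto_measure_abs_sub_gt_of_ae_tendsto [IsFiniteMeasure μ] {F : ℕ → Ω → ℝ}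
    (hF : ∀ n, AEStronglyMeasurable (F n) μ) {ρ : ℝ}
    (hlim : ∀ᵐ ω ∂μ, Tendsto (fun n => F n ω) atTop (𝓝 ρ)) {ε : ℝ} (hε : 0 < ε) :
    Tendsto (fun n => μ {ω | |F n ω - ρ| > ε}) atTop (𝓝 0) := by
  have := tendstoInMeasure_iff_norm.1 (tendstoInMeasure_of_tendsto_ae hF hlim) ε hε
  exact tendsto_of_tendsto_of_tendsto_of_le_of_le tendsto_const_nhds this (fun _ => zero_le)
    fun n => measure_mono fun ω (hω : ε < |F n ω - ρ|) => hω.le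

end Probability

section Empirical

variable {Ω : Type*} [MeasurableSpace Ω] {μ : Measure Ω} {f : ℝ → ℝ} {X : ℕ → Ω → ℝ}

lemma ae_tendsto_average_of_density (hf : Measurable f) (hf0 : ∀ t, 0 ≤ f t)
    (hmeas : ∀ i, Measurable (X i)) (hindep : iIndepFun X μ)
    (hdist : ∀ i, Measure.map (X i) μ = volume.withDensity (fun t => ENNReal.ofReal (f t)))
    {g : ℝ → ℝ} (hg : Measurable g) (hint : Integrable (fun t => f t * g t)) :
    ∀ᵐ ω ∂μ, Tendsto (fun n : ℕ => (∑ i ∈ range n, g (X i ω)) / n) atTop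
      (𝓝 (∫ t, f t * g t)) := by
  rw [← integral_withDensity_ofReal hf hf0]
  exact ae_tendsto_average_comp hmeas hindep hdist hg
    ((integrable_withDensity_ofReal_iff hf hf0).2 hint)

lemma ae_tendsto_empirical_absTail (hf : Measurable f) (hf0 : ∀ t, 0 ≤ f t)
    (hf_int : Integrable f) (habs_int : Integrable fun t => |t| * f t)
    (hmeas : ∀ i, Measurable (X i)) (hindep : iIndepFun X μ)
    (hdist : ∀ i, Measure.map (X i) μ = volume.withDensity (fun t => ENNReal.ofReal (f t))) :
    ∀ᵐ ω ∂μ, Tendsto (fun n : ℕ => (∑ i ∈ range n, |X i ω|) / n) atTop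
        (𝓝 (∫ t, |t| * f t)) ∧
      ∀ q : ℚ,
        Tendsto (fun n : ℕ => (#{i ∈ range n | (q : ℝ) < |X i ω|} : ℝ) / n) atTop
          (𝓝 (absTailIntegral f q)) ∧
        Tendsto (fun n : ℕ => (∑ i ∈ range n with (q : ℝ) < |X i ω|, |X i ω|) / n) atTop
          (𝓝 (absTailIntegral (fun t => |t| * f t) q)) := by
  have habs_int' : Integrable fun t => f t * |t| := by simpa only [mul_comm] using habs_int
  have htotal := ae_tendsto_average_of_density hf hf0 hmeas hindep hdist measurable_abs habs_int'
  have hcount : ∀ c : ℝ, ∀ᵐ ω ∂μ,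
      Tendsto (fun n : ℕ => (#{i ∈ range n | c < |X i ω|} : ℝ) / n) atTop
        (𝓝 (absTailIntegral f c)) := by
    intro c
    have hs : MeasurableSet {t : ℝ | c < |t|} := measurableSet_lt measurable_const measurable_abs
    have h := ae_tendsto_average_of_density hf hf0 hmeas hindep hdist
      (g := fun t => if c < |t| then 1 else 0) (measurable_const.ite hs measurable_const)
      ((hf_int.indicator hs).congr (Eventually.of_forall fun t => by simp [Set.indicator_apply]))
    simpa [absTailIntegral, Set.indicator_apply] using h
  have hsum : ∀ c : ℝ, ∀ᵐ ω ∂μ,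
      Tendsto (fun n : ℕ => (∑ i ∈ range n with c < |X i ω|, |X i ω|) / n) atTop
        (𝓝 (absTailIntegral (fun t => |t| * f t) c)) := by
    intro c
    have hs : MeasurableSet {t : ℝ | c < |t|} := measurableSet_lt measurable_const measurable_abs
    have h := ae_tendsto_average_of_density hf hf0 hmeas hindep hdist
      (g := fun t => if c < |t| then |t| else 0) (measurable_abs.ite hs measurable_const)
      ((habs_int.indicator hs).congr
        (Eventually.of_forall fun t => by simp [Set.indicator_apply, mul_comm]))
    simpa [absTailIntegral, Set.indicator_apply, sum_filter, mul_comm] using h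
  filter_upwards [htotal, ae_all_iff.2 fun q : ℚ => (hcount q).and (hsum q)] with ω h1 h2
  exact ⟨by simpa only [mul_comm] using h1, h2⟩

end Empirical

section SymmetricDensity

variable {f : ℝ → ℝ}

lemma integrableOn_Ioi_mul_of_integrableOn_sq_mul (hf : Continuous f)
    (htail : IntegrableOn (fun t => t ^ 2 * f t) (Set.Ioi 1)) :
    IntegrableOn (fun t => t * f t) (Set.Ioi 0) := by
  have hnear : IntegrableOn (fun t => t * f t) (Set.Ioc 0 1) :=
    (continuous_id.mul hf).integrableOn_Ioc
  have hfar : IntegrableOn (fun t => t * f t) (Set.Ioi 1) := by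
    refine Integrable.mono htail (continuous_id.mul hf).aestronglyMeasurable
      ((ae_restrict_iff' measurableSet_Ioi).2 (Eventually.of_forall fun t (ht : 1 < t) => ?_))
    have ht0 : 0 ≤ t := zero_le_one.trans ht.le
    rw [norm_mul, norm_mul, Real.norm_of_nonneg ht0, Real.norm_of_nonneg (sq_nonneg t)]
    exact mul_le_mul_of_nonneg_right (le_self_pow₀ ht.le two_ne_zero) (norm_nonneg _)
  rw [← Set.Ioc_union_Ioi_eq_Ioi zero_le_one]
  exact hnear.union hfar

lemma integrable_abs_mul_of_even (hsymm : ∀ t, f (-t) = f t) (hf : Continuous f)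
    (htail : IntegrableOn (fun t => t ^ 2 * f t) (Set.Ioi 1)) :
    Integrable fun t => |t| * f t :=
  integrable_of_even_of_integrableOn_Ioi (fun t => by rw [abs_neg, hsymm])
    ((integrableOn_Ioi_mul_of_integrableOn_sq_mul hf htail).congr_fun
      (fun t (ht : 0 < t) => by rw [abs_of_pos ht]) measurableSet_Ioi)

lemma integral_abs_mul_pos (hint : Integrable fun t => |t| * f t) (hf0 : ∀ t, 0 ≤ f t)
    (hpos : ∀ t, 0 < t → 0 < f t) : 0 < ∫ t, |t| * f t := by
  refine (integral_pos_iff_support_of_nonneg (fun t => mul_nonneg (abs_nonneg t) (hf0 t))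
    hint).2 ?_
  calc (0 : ENNReal) < volume (Set.Ioi (0 : ℝ)) := by simp
    _ ≤ _ := measure_mono fun t (ht : 0 < t) => (mul_pos (abs_pos.2 ht.ne') (hpos t ht)).ne'

lemma integral_abs_mul_sub_absTailIntegral (hsymm : ∀ t, f (-t) = f t)
    (hint : Integrable fun t => |t| * f t) {a : ℝ} (ha : 0 ≤ a) :
    (∫ t, |t| * f t) - absTailIntegral (fun t => |t| * f t) a =
      2 * ∫ t in (0 : ℝ)..a, t * f t := by
  have habs_even : ∀ t, |-t| * f (-t) = |t| * f t := fun t => by rw [abs_neg, hsymm]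
  rw [← absTailIntegral_zero_of_even habs_even,
    absTailIntegral_sub_absTailIntegral_of_even habs_even hint le_rfl ha]
  congr 1
  exact intervalIntegral.integral_congr fun t (ht : t ∈ Set.uIcc 0 a) => by
    rw [abs_of_nonneg (Set.uIcc_of_le ha ▸ ht).1]

end SymmetricDensity

/-- Concentration of the partial sums of order statistics of i.i.d. random variables with a
symmetric density `f`: with `M = ⌊γN⌋` and `a = Ψ_f(γ/2)`,
`S_M/S_N → 1 − 2∫₀^a x f(x) dx / E|X|` in probability. -/
theorem stmt9 (f : ℝ → ℝ) (hcont : Continuous f) (hsymm : ∀ t, f (-t) = f t)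
    (hpos : ∀ t : ℝ, 0 < t → 0 < f t) (hnonneg : ∀ t, 0 ≤ f t)
    (hpdf : ∫ t, f t = 1)
    (htail : ∀ b : ℝ, 0 < b → IntegrableOn (fun t => t ^ 2 * f t) (Set.Ioi b))
    {Ω : Type*} [MeasurableSpace Ω] (μ : Measure Ω) [IsProbabilityMeasure μ]
    (X : ℕ → Ω → ℝ) (hmeas : ∀ i, Measurable (X i))
    (hindep : iIndepFun X μ)
    (hdist : ∀ i, Measure.map (X i) μ =
      MeasureTheory.volume.withDensity (fun t => ENNReal.ofReal (f t)))
    (γ : ℝ) (hγ : γ ∈ Set.Ioo (0 : ℝ) 1)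
    (a : ℝ) (ha : 0 ≤ a) (hQa : (∫ t in Set.Ioi a, f t) = γ / 2) :
    ∃ ε₀ > 0, ∀ ε : ℝ, 0 < ε → ε < ε₀ →
      Tendsto
        (fun N => μ {ω | |topSum N ⌊γ * N⌋₊ (fun i => |X i ω|) /
            (∑ i ∈ Finset.range N, |X i ω|) -
            (1 - 2 * (∫ t in (0:ℝ)..a, t * f t) / (∫ t, |t| * f t))| > ε})
        atTop (nhds 0) := by
  have hf_int : Integrable f := .of_integral_ne_zero (by simp [hpdf])
  have habs_int := integrable_abs_mul_of_even hsymm hcont (htail 1 one_pos)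
  have hE := integral_abs_mul_pos habs_int hnonneg hpos
  have htail_a : absTailIntegral f a = γ := by
    rw [absTailIntegral_eq_of_even hsymm ha, hQa]; ring
  have ha0 : 0 < a := ha.lt_of_ne fun h => hγ.2.ne <| by
    rw [← htail_a, ← h, absTailIntegral_zero_of_even hsymm, hpdf]
  have hanti := absTailIntegral_strictAntiOn hsymm hf_int hpos
  have hae : ∀ᵐ ω ∂μ, Tendsto (fun N : ℕ => topSum N ⌊γ * N⌋₊ (fun i => |X i ω|) /
      ∑ i ∈ range N, |X i ω|) atTop
      (𝓝 (absTailIntegral (fun t => |t| * f t) a / ∫ t, |t| * f t)) := by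
    filter_upwards [ae_tendsto_empirical_absTail hcont.measurable hnonneg hf_int habs_int
      hmeas hindep hdist] with ω ⟨htotal, hq⟩
    exact tendsto_topSum_floor_mul_div_sum (fun i => abs_nonneg _) hγ.2.le ha0
      (fun q => (hq q).1) (fun q => (hq q).2)
      (fun c hac => htail_a ▸ hanti ha (ha.trans hac.le) hac)
      (fun c hc hca => htail_a ▸ hanti hc.le ha hca)
      (continuous_absTailIntegral habs_int).continuousAt hE.ne' htotal
  have hlimit : 1 - 2 * (∫ t in (0:ℝ)..a, t * f t) / (∫ t, |t| * f t) =
      absTailIntegral (fun t => |t| * f t) a / ∫ t, |t| * f t := by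
    rw [← integral_abs_mul_sub_absTailIntegral hsymm habs_int ha]
    field_simp
    ring
  refine ⟨1, one_pos, fun ε hε _ => hlimit ▸ tendsto_measure_abs_sub_gt_of_ae_tendsto
    (fun N => ?_) hae hε⟩
  exact ((measurable_topSum (fun i => (hmeas i).abs) _ _).div
    (measurable_sum _ fun i _ => (hmeas i).abs)).aestronglyMeasurable
end
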